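/- For every n ≥ 1, the identity Σ_{T∈𝒫_n} x_1^{oleaf(T)} x_2^{yleaf(T)} y_1^{oint(T)} y_2^{yint(T)} = M_{n−1}(x_1 y_1, x_2 + y_2) holds in ℤ[x_1, x_2, y_1, y_2], where M_m(u,v) = Σ_{k=0}^{⌊m/2⌋} binom(m, 2k) · C_k · u^{k+1} v^{m−2k} and C_k = binom(2k,k)/(k+1) is the k-th Catalan number. -/

import Mathlib

/-- Labeled plane trees: a node with a label in `ℕ` and a (left-to-right ordered)
list of children. -/
inductive LTree : Type where
  | node : ℕ → List LTree → LTree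

namespace LTree

/-- The label of the root. -/
def label : LTree → ℕ
  | node a _ => a

/-- The list of children of the root, from left to right. -/
def children : LTree → List LTree
  | node _ cs => cs

/-- A tree consisting of a single node is a leaf. -/
def isLeaf (t : LTree) : Bool := t.children.isEmpty

/-- The list of all subtrees (i.e. all nodes) of a tree. -/
def subtrees : LTree → List LTree
  | node a cs => node a cs :: (cs.attach.map (fun c => subtrees c.1)).flatten
decreasing_by
  simp only [LTree.node.sizeOf_spec]
  have := List.sizeOf_lt_of_mem c.2
  omega

/-- The multiset of labels of all nodes of a tree. -/
def labels (T : LTree) : Multiset ℕ := (T.subtrees.map label : List ℕ)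

/-- `T` is a weakly increasing tree on the multiset `M`: the root is labeled `0`,
the multiset of labels is `M ∪ {0}`, labels weakly increase along root-to-leaf paths,
and the labels of the children of each node weakly increase from right to left. -/
def IsWIT (M : Multiset ℕ) (T : LTree) : Prop :=
  T.label = 0 ∧ T.labels = 0 ::ₘ M ∧
  ∀ t ∈ T.subtrees, (∀ c ∈ t.children, t.label ≤ c.label) ∧
    List.Chain' (fun a b => b ≤ a) (t.children.map label)

/-- `T` is (an encoding of) a plane tree with `n` edges: all labels are zero
and there are `n + 1` nodes. -/
def IsPlane (n : ℕ) (T : LTree) : Prop :=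
  (∀ t ∈ T.subtrees, t.label = 0) ∧ T.subtrees.length = n + 1

/-- The number of singleton leaves: leaves that are the only child of their parent. -/
def sleaf (T : LTree) : ℕ :=
  T.subtrees.countP (fun t => match t.children with
    | [c] => c.isLeaf
    | _ => false)

/-- The number of elder leaves: leaves that are the leftmost child of their parent
and have siblings. -/
def eleaf (T : LTree) : ℕ :=
  T.subtrees.countP (fun t => match t.children with
    | c :: _ :: _ => c.isLeaf
    | _ => false)

/-- The number of young leaves: leaves that are not the leftmost child of their parent. -/
def yleaf (T : LTree) : ℕ :=
  (T.subtrees.map (fun t => t.children.tail.countP isLeaf)).sum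

/-- The number of young internal nodes: internal nodes whose leftmost child is internal. -/
def yint (T : LTree) : ℕ :=
  T.subtrees.countP (fun t => match t.children with
    | c :: _ => !c.isLeaf
    | _ => false)

/-- The number of singleton internal nodes: parents of a singleton leaf. -/
def sint (T : LTree) : ℕ :=
  T.subtrees.countP (fun t => match t.children with
    | [c] => c.isLeaf
    | _ => false)

/-- The number of elder internal nodes: parents of an elder leaf. -/
def eint (T : LTree) : ℕ :=
  T.subtrees.countP (fun t => match t.children with
    | c :: _ :: _ => c.isLeaf
    | _ => false)

/-- The number of old leaves: leaves that are the leftmost child of their parent. -/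
def oleaf (T : LTree) : ℕ := sleaf T + eleaf T

/-- The number of old internal nodes. -/
def oint (T : LTree) : ℕ := sint T + eint T

end LTree

/-!
Removing the last child of the root is a bijection from plane trees with `n + 1` edges onto
pairs `(T, c)` of plane trees with `i` and `j` edges, `i + j = n`. The weight is multiplicative
along it, up to a factor that only depends on whether `T` and `c` are single nodes, so the tree
sums `P_n` obey `P_{n+3} = (x₂ + y₂) P_{n+2} + ∑_{i+j=n} P_{i+1} P_{j+1}` with `P_1 = x₁y₁` and
`P_2 = x₁y₁(x₂ + y₂)`. This is the recurrence of `u M_n(u, v)` for `u = x₁y₁`, `v = x₂ + y₂`,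
which the closed form of the Motzkin polynomials satisfies by the upper Vandermonde identity
`∑_{i+j=n} C(i, r) C(j, s) = C(n + 1, r + s + 1)` and the Catalan recurrence.
-/

open Finset

theorem Nat.sum_antidiagonal_choose_mul_choose (n r s : ℕ) :
    ∑ p ∈ antidiagonal n, p.1.choose r * p.2.choose s = (n + 1).choose (r + s + 1) := by
  induction n generalizing r with
  | zero => rcases r with _ | r <;> rcases s with _ | s <;> simp [Nat.choose_eq_zero_of_lt]
  | succ n ih =>
    rw [Nat.sum_antidiagonal_succ]
    rcases r with _ | r
    · have := ih 0
      simp only [Nat.choose_zero_right, one_mul, zero_add] at this ⊢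
      rw [this, ← Nat.choose_succ_succ']
    · simp only [Nat.choose_succ_succ' _ r, add_mul, sum_add_distrib, ih, Nat.choose_zero_succ,
        zero_mul, zero_add]
      rw [show r + 1 + s + 1 = r + s + 1 + 1 by ring, ← Nat.choose_succ_succ' (n + 1)]

theorem Finset.sum_range_sum_range_eq_sum_range_sum_antidiagonal {M : Type*} [AddCommMonoid M]
    (N : ℕ) (f : ℕ → ℕ → M) (hf : ∀ a b, N ≤ a + b → f a b = 0) :
    ∑ a ∈ range N, ∑ b ∈ range N, f a b = ∑ s ∈ range N, ∑ p ∈ antidiagonal s, f p.1 p.2 := by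
  calc ∑ a ∈ range N, ∑ b ∈ range N, f a b
      = ∑ p ∈ range N ×ˢ range N with p.1 + p.2 ∈ range N, f p.1 p.2 := by
        rw [← sum_product', sum_filter_of_ne]
        intro p _ hp
        contrapose! hp
        exact hf _ _ (by simpa using hp)
    _ = ∑ s ∈ range N, ∑ p ∈ range N ×ˢ range N with p.1 + p.2 = s, f p.1 p.2 :=
        (sum_fiberwise_eq_sum_filter _ _ _ _).symm
    _ = ∑ s ∈ range N, ∑ p ∈ antidiagonal s, f p.1 p.2 := by
        refine sum_congr rfl fun s hs => sum_congr ?_ fun _ _ => rfl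
        ext p
        simp only [mem_filter, mem_product, mem_range, HasAntidiagonal.mem_antidiagonal] at hs ⊢
        omega

section Motzkin

variable {R : Type*} [CommSemiring R] (u v : R)

/-- The Motzkin polynomial `M_m(u, v)`: `u` marks pairs of up and down steps of a Motzkin path
of length `m`, `v` its level steps. -/
def motzkinPoly (m : ℕ) : R :=
  ∑ k ∈ range (m / 2 + 1), (m.choose (2 * k) * catalan k : ℕ) * u ^ k * v ^ (m - 2 * k)

theorem motzkinPoly_eq_sum_range {m N : ℕ} (h : m < 2 * N) :
    motzkinPoly u v m =
      ∑ k ∈ range N, (m.choose (2 * k) * catalan k : ℕ) * u ^ k * v ^ (m - 2 * k) := by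
  refine sum_subset (range_subset_range.2 (by omega)) fun k _ hk => ?_
  rw [Nat.choose_eq_zero_of_lt (by simp only [mem_range] at hk; omega)]
  simp

@[simp]
theorem motzkinPoly_zero : motzkinPoly u v 0 = 1 := by simp [motzkinPoly]

@[simp]
theorem motzkinPoly_one : motzkinPoly u v 1 = v := by simp [motzkinPoly]

theorem choose_mul_pow_mul_choose_mul_pow (x : R) (i j a b : ℕ) :
    (i.choose (2 * a) : R) * x ^ (i - 2 * a) * ((j.choose (2 * b) : R) * x ^ (j - 2 * b)) =
      (i.choose (2 * a) * j.choose (2 * b) : ℕ) * x ^ (i + j - 2 * (a + b)) := by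
  rcases lt_or_ge i (2 * a) with hi | hi
  · simp [Nat.choose_eq_zero_of_lt hi]
  rcases lt_or_ge j (2 * b) with hj | hj
  · simp [Nat.choose_eq_zero_of_lt hj]
  rw [show i + j - 2 * (a + b) = (i - 2 * a) + (j - 2 * b) by omega, pow_add]
  push_cast
  ring

theorem sum_antidiagonal_motzkinPoly_mul (n : ℕ) :
    ∑ p ∈ antidiagonal n, motzkinPoly u v p.1 * motzkinPoly u v p.2 =
      ∑ s ∈ range (n + 1),
        ((n + 1).choose (2 * s + 1) * catalan (s + 1) : ℕ) * u ^ s * v ^ (n - 2 * s) := by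
  have expand : ∀ p ∈ antidiagonal n, motzkinPoly u v p.1 * motzkinPoly u v p.2 =
      ∑ a ∈ range (n + 1), ∑ b ∈ range (n + 1),
        (p.1.choose (2 * a) * catalan a : ℕ) * u ^ a * v ^ (p.1 - 2 * a) *
          ((p.2.choose (2 * b) * catalan b : ℕ) * u ^ b * v ^ (p.2 - 2 * b)) := by
    intro p hp
    rw [HasAntidiagonal.mem_antidiagonal] at hp
    rw [motzkinPoly_eq_sum_range u v (N := n + 1) (by omega),
      motzkinPoly_eq_sum_range u v (N := n + 1) (by omega), sum_mul_sum]
  have vandermonde : ∀ a b, ∑ p ∈ antidiagonal n,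
      (p.1.choose (2 * a) * catalan a : ℕ) * u ^ a * v ^ (p.1 - 2 * a) *
        ((p.2.choose (2 * b) * catalan b : ℕ) * u ^ b * v ^ (p.2 - 2 * b)) =
      ((n + 1).choose (2 * (a + b) + 1) * (catalan a * catalan b) : ℕ) * u ^ (a + b) *
        v ^ (n - 2 * (a + b)) := by
    intro a b
    have term : ∀ p ∈ antidiagonal n,
        (p.1.choose (2 * a) * catalan a : ℕ) * u ^ a * v ^ (p.1 - 2 * a) *
          ((p.2.choose (2 * b) * catalan b : ℕ) * u ^ b * v ^ (p.2 - 2 * b)) =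
        (p.1.choose (2 * a) * p.2.choose (2 * b) : ℕ) *
          ((catalan a * catalan b : ℕ) * u ^ (a + b) * v ^ (n - 2 * (a + b))) := by
      intro p hp
      rw [HasAntidiagonal.mem_antidiagonal] at hp
      calc _ = (p.1.choose (2 * a) : R) * v ^ (p.1 - 2 * a) *
              ((p.2.choose (2 * b) : R) * v ^ (p.2 - 2 * b)) *
                ((catalan a * catalan b : ℕ) * u ^ (a + b)) := by push_cast; ring
        _ = _ := by rw [choose_mul_pow_mul_choose_mul_pow, hp]; ring
    rw [sum_congr rfl term, ← sum_mul, ← Nat.cast_sum, Nat.sum_antidiagonal_choose_mul_choose,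
      show 2 * a + 2 * b + 1 = 2 * (a + b) + 1 by ring]
    push_cast
    ring
  rw [sum_congr rfl expand, sum_comm, sum_congr rfl fun a _ => sum_comm]
  simp_rw [vandermonde]
  rw [sum_range_sum_range_eq_sum_range_sum_antidiagonal]
  · refine sum_congr rfl fun s _ => ?_
    have diagonal : ∀ p ∈ antidiagonal s,
        ((n + 1).choose (2 * (p.1 + p.2) + 1) * (catalan p.1 * catalan p.2) : ℕ) *
          u ^ (p.1 + p.2) * v ^ (n - 2 * (p.1 + p.2)) =
        ((n + 1).choose (2 * s + 1) * (catalan p.1 * catalan p.2) : ℕ) * u ^ s * v ^ (n - 2 * s) :=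
      fun p hp => by rw [HasAntidiagonal.mem_antidiagonal.1 hp]
    rw [sum_congr rfl diagonal, ← sum_mul, ← sum_mul, ← Nat.cast_sum, ← mul_sum, ← catalan_succ']
  · intro a b hab
    rw [Nat.choose_eq_zero_of_lt (by omega)]
    simp

theorem motzkinPoly_add_two (n : ℕ) :
    motzkinPoly u v (n + 2) = v * motzkinPoly u v (n + 1) +
      u * ∑ p ∈ antidiagonal n, motzkinPoly u v p.1 * motzkinPoly u v p.2 := by
  have pascal : ∀ s ∈ range (n + 1),
      ((n + 2).choose (2 * (s + 1)) * catalan (s + 1) : ℕ) * u ^ (s + 1) *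
          v ^ (n + 2 - 2 * (s + 1)) =
        v * (((n + 1).choose (2 * (s + 1)) * catalan (s + 1) : ℕ) * u ^ (s + 1) *
          v ^ (n + 1 - 2 * (s + 1))) +
        u * (((n + 1).choose (2 * s + 1) * catalan (s + 1) : ℕ) * u ^ s * v ^ (n - 2 * s)) := by
    intro s _
    rw [show n + 2 - 2 * (s + 1) = n - 2 * s by omega, show 2 * (s + 1) = 2 * s + 1 + 1 by ring,
      Nat.choose_succ_succ' (n + 1)]
    rcases lt_or_ge (n + 1) (2 * s + 1 + 1) with h | h
    · rw [Nat.choose_eq_zero_of_lt h]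
      push_cast
      ring
    · rw [show n - 2 * s = n + 1 - (2 * s + 1 + 1) + 1 by omega]
      push_cast
      ring
  rw [motzkinPoly_eq_sum_range u v (N := n + 2) (by omega),
    motzkinPoly_eq_sum_range u v (N := n + 2) (by omega), sum_antidiagonal_motzkinPoly_mul,
    mul_sum, mul_sum, sum_range_succ', sum_range_succ' (fun k => v * _), sum_congr rfl pascal,
    sum_add_distrib]
  simp only [mul_zero, Nat.choose_zero_right, catalan_zero, pow_zero]
  push_cast
  ring

end Motzkin

namespace LTree

theorem subtrees_node (a : ℕ) (cs : List LTree) :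
    (node a cs).subtrees = node a cs :: (cs.map subtrees).flatten := by
  rw [subtrees]
  simp

theorem isLeaf_node (a : ℕ) (cs : List LTree) : (node a cs).isLeaf ↔ cs = [] := by
  simp [isLeaf, children]

def addLast : LTree → LTree → LTree
  | node a cs, c => node a (cs ++ [c])

theorem addLast_inj {T T' c c' : LTree} : addLast T c = addLast T' c' ↔ T = T' ∧ c = c' := by
  refine ⟨fun h => ?_, fun ⟨hT, hc⟩ => hT ▸ hc ▸ rfl⟩
  cases T; cases T'
  simp only [addLast, node.injEq] at h
  obtain ⟨rfl, h⟩ := h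
  obtain ⟨rfl, hc⟩ := List.append_inj' h rfl
  exact ⟨rfl, List.singleton_inj.1 hc⟩

theorem eq_leaf_or_eq_addLast (T : LTree) : (∃ a, T = node a []) ∨ ∃ T' c, T = addLast T' c := by
  obtain ⟨a, cs⟩ := T
  rcases List.eq_nil_or_concat' cs with rfl | ⟨cs, c, rfl⟩
  · exact Or.inl ⟨a, rfl⟩
  · exact Or.inr ⟨node a cs, c, rfl⟩

theorem subtrees_eq_cons (T : LTree) : T.subtrees = T :: T.subtrees.tail := by
  cases T; simp [subtrees_node]

theorem subtrees_addLast (T c : LTree) :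
    (addLast T c).subtrees = addLast T c :: (T.subtrees.tail ++ c.subtrees) := by
  cases T; simp [addLast, subtrees_node]

theorem label_addLast (T c : LTree) : (addLast T c).label = T.label := by
  cases T; rfl

theorem isPlane_leaf_iff {n a : ℕ} : IsPlane n (node a []) ↔ n = 0 ∧ a = 0 := by
  simp [IsPlane, subtrees_node, label, eq_comm, and_comm]

theorem isPlane_addLast_iff {n : ℕ} {T c : LTree} :
    IsPlane n (addLast T c) ↔ ∃ i j, i + j + 1 = n ∧ IsPlane i T ∧ IsPlane j c := by
  rw [IsPlane, subtrees_addLast]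
  conv in IsPlane _ T => rw [IsPlane, subtrees_eq_cons T]
  have hc : c.subtrees.length = c.subtrees.tail.length + 1 :=
    congrArg List.length (subtrees_eq_cons c)
  simp only [List.forall_mem_cons, List.forall_mem_append, label_addLast, List.length_cons,
    List.length_append, IsPlane]
  constructor
  · rintro ⟨⟨h0, hT, hc'⟩, hlen⟩
    exact ⟨_, _, by omega, ⟨⟨h0, hT⟩, rfl⟩, hc', hc⟩
  · rintro ⟨i, j, rfl, ⟨⟨h0, hT⟩, hi⟩, hc', hj⟩
    exact ⟨⟨h0, hT, hc'⟩, by omega⟩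

theorem isPlane_zero_iff {T : LTree} : IsPlane 0 T ↔ T = node 0 [] := by
  rcases eq_leaf_or_eq_addLast T with ⟨a, rfl⟩ | ⟨T', c, rfl⟩
  · simp [isPlane_leaf_iff]
  · refine iff_of_false (fun h => ?_) ?_
    · obtain ⟨i, j, hij, -⟩ := isPlane_addLast_iff.1 h
      omega
    · cases T'
      simp [addLast]

theorem isLeaf_iff_of_isPlane {n : ℕ} {T : LTree} (h : IsPlane n T) : T.isLeaf ↔ n = 0 := by
  rcases eq_leaf_or_eq_addLast T with ⟨a, rfl⟩ | ⟨⟨a, cs⟩, c, rfl⟩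
  · simp [isLeaf_node, (isPlane_leaf_iff.1 h).1]
  · obtain ⟨i, j, rfl, -⟩ := isPlane_addLast_iff.1 h
    simp [addLast, isLeaf_node]

open scoped Classical in
noncomputable def planeTrees : ℕ → Finset LTree
  | 0 => {node 0 []}
  | n + 1 => (antidiagonal n).attach.biUnion fun p =>
      (planeTrees p.1.1 ×ˢ planeTrees p.1.2).image fun q => addLast q.1 q.2
decreasing_by all_goals have := HasAntidiagonal.mem_antidiagonal.1 p.2; omega

theorem mem_planeTrees {n : ℕ} {T : LTree} : T ∈ planeTrees n ↔ IsPlane n T := by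
  induction n using Nat.strong_induction_on generalizing T with
  | _ n ih =>
  cases n with
  | zero => rw [planeTrees, mem_singleton, isPlane_zero_iff]
  | succ n =>
    rw [planeTrees]
    simp only [mem_biUnion, mem_attach, mem_image, mem_product, true_and]
    constructor
    · rintro ⟨⟨p, hp⟩, ⟨T', c⟩, ⟨hT', hc⟩, rfl⟩
      rw [HasAntidiagonal.mem_antidiagonal] at hp
      exact isPlane_addLast_iff.2
        ⟨p.1, p.2, by omega, (ih _ (by omega)).1 hT', (ih _ (by omega)).1 hc⟩
    · intro h
      rcases eq_leaf_or_eq_addLast T with ⟨a, rfl⟩ | ⟨T', c, rfl⟩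
      · simp [isPlane_leaf_iff] at h
      · obtain ⟨i, j, hij, hT', hc⟩ := isPlane_addLast_iff.1 h
        exact ⟨⟨(i, j), HasAntidiagonal.mem_antidiagonal.2 (by omega)⟩, ⟨T', c⟩,
          ⟨(ih i (by omega)).2 hT', (ih j (by omega)).2 hc⟩, rfl⟩

open scoped Classical in
theorem sum_planeTrees_succ {M : Type*} [AddCommMonoid M] (f : LTree → M) (n : ℕ) :
    ∑ T ∈ planeTrees (n + 1), f T =
      ∑ p ∈ antidiagonal n, ∑ T ∈ planeTrees p.1, ∑ c ∈ planeTrees p.2, f (addLast T c) := by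
  rw [planeTrees, sum_biUnion, ← sum_attach (antidiagonal n)]
  · refine sum_congr rfl fun p _ => ?_
    rw [sum_image fun q _ q' _ h => Prod.ext_iff.2 (addLast_inj.1 h), sum_product]
  · intro p _ q _ hpq
    refine disjoint_left.2 fun T hTp hTq => hpq ?_
    simp only [mem_image, mem_product] at hTp hTq
    obtain ⟨⟨T₁, c⟩, ⟨-, hcp⟩, rfl⟩ := hTp
    obtain ⟨⟨T₂, c'⟩, ⟨-, hcq⟩, h⟩ := hTq
    obtain ⟨-, rfl⟩ := addLast_inj.1 h
    have hsize := (mem_planeTrees.1 hcp).2.symm.trans (mem_planeTrees.1 hcq).2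
    have hp := HasAntidiagonal.mem_antidiagonal.1 p.2
    have hq := HasAntidiagonal.mem_antidiagonal.1 q.2
    exact Subtype.ext (Prod.ext (by omega) (by omega))

theorem sum_planeTrees_ite_isLeaf {M : Type*} [AddCommMonoid M] (n : ℕ) (A : M)
    (B : LTree → M) :
    ∑ c ∈ planeTrees n, (if c.isLeaf then A else B c) =
      if n = 0 then A else ∑ c ∈ planeTrees n, B c := by
  split_ifs with hn
  · subst hn
    simp [planeTrees, isLeaf_node]
  · refine sum_congr rfl fun c hc => if_neg ?_
    rwa [isLeaf_iff_of_isPlane (mem_planeTrees.1 hc)]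

theorem countP_subtrees_node (p : LTree → Bool) (a : ℕ) (cs : List LTree) :
    (node a cs).subtrees.countP p =
      (if p (node a cs) then 1 else 0) + (cs.map (·.subtrees.countP p)).sum := by
  rw [subtrees_node, List.countP_cons, List.countP_flatten, List.map_map, add_comm]
  rfl

theorem sum_subtrees_node (f : LTree → ℕ) (a : ℕ) (cs : List LTree) :
    ((node a cs).subtrees.map f).sum = f (node a cs) + (cs.map (·.subtrees.map f |>.sum)).sum := by
  simp [subtrees_node, List.sum_flatten, Function.comp_def]

theorem oint_eq_oleaf (T : LTree) : oint T = oleaf T := rfl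

@[simp]
theorem oleaf_leaf (a : ℕ) : oleaf (node a []) = 0 := by
  simp [oleaf, sleaf, eleaf, subtrees_node, children]

@[simp]
theorem yleaf_leaf (a : ℕ) : yleaf (node a []) = 0 := by
  simp [yleaf, subtrees_node, children]

@[simp]
theorem yint_leaf (a : ℕ) : yint (node a []) = 0 := by
  simp [yint, subtrees_node, children]

theorem oleaf_node_singleton (a : ℕ) (c : LTree) :
    oleaf (node a [c]) = (if c.isLeaf then 1 else 0) + oleaf c := by
  simp only [oleaf, sleaf, eleaf, countP_subtrees_node, children, List.map_cons, List.map_nil,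
    List.sum_cons, List.sum_nil, add_zero, Bool.false_eq_true, ↓reduceIte, zero_add]
  omega

theorem yleaf_node_singleton (a : ℕ) (c : LTree) : yleaf (node a [c]) = yleaf c := by
  simp [yleaf, sum_subtrees_node, children]

theorem yint_node_singleton (a : ℕ) (c : LTree) :
    yint (node a [c]) = (if c.isLeaf then 0 else 1) + yint c := by
  simp only [yint, countP_subtrees_node, children]
  by_cases h : c.isLeaf <;> simp [h]

theorem oleaf_node_cons_append (a : ℕ) (d : LTree) (t : List LTree) (c : LTree) :
    oleaf (node a (d :: (t ++ [c]))) = oleaf (node a (d :: t)) + oleaf c := by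
  -- whether `d` is a singleton or an elder leaf of `node a (d :: t)` depends on `t`
  cases t <;>
    simp only [oleaf, sleaf, eleaf, countP_subtrees_node, children, List.nil_append,
      List.cons_append, Bool.false_eq_true, ↓reduceIte, List.map_cons, List.map_append,
      List.map_nil, List.sum_cons, List.sum_append, List.sum_nil, add_zero, zero_add] <;>
    omega

theorem yleaf_node_cons_append (a : ℕ) (d : LTree) (t : List LTree) (c : LTree) :
    yleaf (node a (d :: (t ++ [c]))) =
      yleaf (node a (d :: t)) + yleaf c + (if c.isLeaf then 1 else 0) := by
  simp only [yleaf, sum_subtrees_node, children, List.tail_cons, List.countP_append,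
    List.countP_singleton, List.map_cons, List.map_append, List.map_nil, List.sum_cons,
    List.sum_append, List.sum_nil, add_zero]
  omega

theorem yint_node_cons_append (a : ℕ) (d : LTree) (t : List LTree) (c : LTree) :
    yint (node a (d :: (t ++ [c]))) = yint (node a (d :: t)) + yint c := by
  simp only [yint, countP_subtrees_node, children, Bool.not_eq_eq_eq_not, Bool.not_true,
    List.map_cons, List.map_append, List.map_nil, List.sum_cons, List.sum_append, List.sum_nil,
    add_zero]
  omega

section Weight

variable {R : Type*} [CommSemiring R] (x₁ x₂ y₁ y₂ : R)

def weight (T : LTree) : R := x₁ ^ oleaf T * x₂ ^ yleaf T * y₁ ^ oint T * y₂ ^ yint T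

theorem weight_addLast_of_isLeaf {T : LTree} (hT : T.isLeaf) (c : LTree) :
    weight x₁ x₂ y₁ y₂ (addLast T c) =
      if c.isLeaf then x₁ * y₁ else y₂ * weight x₁ x₂ y₁ y₂ c := by
  obtain ⟨a, cs⟩ := T
  obtain rfl := (isLeaf_node a cs).1 hT
  simp only [addLast, List.nil_append, weight, oint_eq_oleaf, oleaf_node_singleton,
    yleaf_node_singleton, yint_node_singleton]
  rcases c with ⟨b, _ | ⟨d, t⟩⟩
  · simp [isLeaf_node]
  · simp only [isLeaf_node, reduceCtorEq, ↓reduceIte, zero_add, pow_add, pow_one]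
    ring

theorem weight_addLast {T : LTree} (hT : ¬T.isLeaf) (c : LTree) :
    weight x₁ x₂ y₁ y₂ (addLast T c) =
      weight x₁ x₂ y₁ y₂ T * if c.isLeaf then x₂ else weight x₁ x₂ y₁ y₂ c := by
  obtain ⟨a, _ | ⟨d, t⟩⟩ := T
  · simp [isLeaf_node] at hT
  simp only [addLast, List.cons_append, weight, oint_eq_oleaf, oleaf_node_cons_append,
    yleaf_node_cons_append, yint_node_cons_append]
  rcases c with ⟨b, _ | ⟨d, t⟩⟩
  · simp only [oleaf_leaf, yleaf_leaf, yint_leaf, isLeaf_node, ↓reduceIte, add_zero, pow_add,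
      pow_one]
    ring
  · simp only [isLeaf_node, reduceCtorEq, ↓reduceIte, add_zero, pow_add]
    ring

noncomputable def planeTreeSum (n : ℕ) : R := ∑ T ∈ planeTrees n, weight x₁ x₂ y₁ y₂ T

theorem planeTreeSum_succ (n : ℕ) :
    planeTreeSum x₁ x₂ y₁ y₂ (n + 1) = ∑ p ∈ antidiagonal n,
      if p.1 = 0 then (if p.2 = 0 then x₁ * y₁ else y₂ * planeTreeSum x₁ x₂ y₁ y₂ p.2)
      else planeTreeSum x₁ x₂ y₁ y₂ p.1 *
        if p.2 = 0 then x₂ else planeTreeSum x₁ x₂ y₁ y₂ p.2 := by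
  rw [planeTreeSum, sum_planeTrees_succ]
  refine sum_congr rfl fun ⟨i, j⟩ _ => ?_
  rcases Nat.eq_zero_or_pos i with rfl | hi
  · rw [if_pos rfl, planeTrees, sum_singleton,
      sum_congr rfl fun c _ => weight_addLast_of_isLeaf x₁ x₂ y₁ y₂ (by simp [isLeaf_node]) c,
      sum_planeTrees_ite_isLeaf, ← mul_sum]
    rfl
  · rw [if_neg hi.ne', planeTreeSum, sum_mul]
    refine sum_congr rfl fun T hT => ?_
    have hT : ¬T.isLeaf := by rw [isLeaf_iff_of_isPlane (mem_planeTrees.1 hT)]; exact hi.ne'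
    rw [sum_congr rfl fun c _ => weight_addLast x₁ x₂ y₁ y₂ hT c, ← mul_sum,
      sum_planeTrees_ite_isLeaf]
    rfl

theorem planeTreeSum_one : planeTreeSum x₁ x₂ y₁ y₂ 1 = x₁ * y₁ := by
  simp [planeTreeSum_succ]

theorem planeTreeSum_two : planeTreeSum x₁ x₂ y₁ y₂ 2 = x₁ * y₁ * (x₂ + y₂) := by
  rw [planeTreeSum_succ, Nat.sum_antidiagonal_succ]
  simp only [planeTreeSum_one, HasAntidiagonal.antidiagonal_zero, sum_singleton, ↓reduceIte,
    one_ne_zero, Nat.add_eq_zero_iff, and_false, zero_add, mul_ite]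
  ring

theorem planeTreeSum_add_three (n : ℕ) :
    planeTreeSum x₁ x₂ y₁ y₂ (n + 3) = (x₂ + y₂) * planeTreeSum x₁ x₂ y₁ y₂ (n + 2) +
      ∑ p ∈ antidiagonal n,
        planeTreeSum x₁ x₂ y₁ y₂ (p.1 + 1) * planeTreeSum x₁ x₂ y₁ y₂ (p.2 + 1) := by
  rw [planeTreeSum_succ, Nat.sum_antidiagonal_succ, Nat.sum_antidiagonal_succ']
  simp only [↓reduceIte, Nat.add_eq_zero_iff, one_ne_zero, and_false, and_self]
  ring

theorem planeTreeSum_succ_eq_mul_motzkinPoly (n : ℕ) :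
    planeTreeSum x₁ x₂ y₁ y₂ (n + 1) = x₁ * y₁ * motzkinPoly (x₁ * y₁) (x₂ + y₂) n := by
  induction n using Nat.strong_induction_on with
  | _ n ih =>
  match n with
  | 0 => simp [planeTreeSum_one]
  | 1 => simp [planeTreeSum_two]
  | n + 2 =>
    have convolution : ∀ p ∈ antidiagonal n,
        planeTreeSum x₁ x₂ y₁ y₂ (p.1 + 1) * planeTreeSum x₁ x₂ y₁ y₂ (p.2 + 1) =
          x₁ * y₁ * (x₁ * y₁ * (motzkinPoly (x₁ * y₁) (x₂ + y₂) p.1 *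
            motzkinPoly (x₁ * y₁) (x₂ + y₂) p.2)) := by
      intro p hp
      have := HasAntidiagonal.mem_antidiagonal.1 hp
      rw [ih p.1 (by omega), ih p.2 (by omega)]
      ring
    rw [planeTreeSum_add_three, sum_congr rfl convolution, ← mul_sum, ← mul_sum,
      ih (n + 1) (by omega), motzkinPoly_add_two]
    ring

end Weight

end LTree

open MvPolynomial in
/-- **Theorem (plane trees and Motzkin polynomials).**  For `n ≥ 1`,
`Σ_{T ∈ 𝒫_n} x₁^{oleaf} x₂^{yleaf} y₁^{oint} y₂^{yint} = M_{n-1}(x₁y₁, x₂+y₂)` where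
`M_m(u,v) = Σ_{k=0}^{⌊m/2⌋} C(m,2k)·Catalan(k)·u^{k+1} v^{m-2k}`.  Here `x₁ = X 0`,
`x₂ = X 1`, `y₁ = X 2`, `y₂ = X 3` in `ℤ[x₁,x₂,y₁,y₂]`. -/
theorem plane_tree_refined_narayana_eq_motzkin
    (n : ℕ) (hn : 1 ≤ n)
    (Pn : Finset LTree) (hPn : ∀ T, T ∈ Pn ↔ LTree.IsPlane n T) :
    ∑ T ∈ Pn,
        (X 0 : MvPolynomial (Fin 4) ℤ) ^ LTree.oleaf T * X 1 ^ LTree.yleaf T *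
          X 2 ^ LTree.oint T * X 3 ^ LTree.yint T
      = ∑ k ∈ Finset.range ((n - 1) / 2 + 1),
          (((n - 1).choose (2 * k) * catalan k : ℕ) : MvPolynomial (Fin 4) ℤ) *
            (X 0 * X 2) ^ (k + 1) * (X 1 + X 3) ^ (n - 1 - 2 * k) := by
  obtain ⟨m, rfl⟩ : ∃ m, n = m + 1 := ⟨n - 1, by omega⟩
  have hP : Pn = LTree.planeTrees (m + 1) := by
    ext T
    rw [hPn, LTree.mem_planeTrees]
  rw [hP]
  change LTree.planeTreeSum (X 0) (X 1) (X 2) (X 3) (m + 1) = _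
  rw [LTree.planeTreeSum_succ_eq_mul_motzkinPoly, motzkinPoly, mul_sum, Nat.add_sub_cancel]
  refine sum_congr rfl fun k _ => ?_
  ring
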